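/- arXiv:1707.02672 — 5 statements merged into one kernel-verified Lean document; each statement's English description precedes it below -/
import Mathlib

section
/- Let $\epsilon>0$, $c>0$ with $\epsilon c<1$, $N>0$, and $v\in\mathbb{R}^2$ with $\epsilon|v|<1$, and set $\varGamma=(1-\epsilon^2|v|^2)^{-1/2}$. Define the $3\times3$ matrices $S_2=\begin{pmatrix}1 & -2\epsilon^2 N c^2 \varGamma v^{\mathsf T}\\ 0 & N^2 c^2 I_2\end{pmatrix}$ and $A_0=\begin{pmatrix}\varGamma(1-\epsilon^4 c^2|v|^2) & 2\epsilon^2 N c^2 v^{\mathsf T}\\ 0 & \varGamma(I_2-\epsilon^2 v\otimes v)\end{pmatrix}$. Then $S_2A_0$ is symmetric and positive definite, with eigenvalues $\varGamma(1-\epsilon^4 c^2|v|^2)$, $\varGamma N^2c^2$, and $\varGamma N^2 c^2(1-\epsilon^2|v|^2)$, all positive. -/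
/-!
Since `Γ² (1 - ε²|v|²) = 1`, the first row of `S₂` cancels the off-diagonal block of `A₀`, and
`S₂ A₀ = diag(λ₁, Γ N² c² (I₂ - ε² v vᵀ))`. The lower block has eigenvalue `Γ N² c²` on `v⊥`
and `Γ N² c² (1 - ε²|v|²)` on `v`; by Lagrange's identity its quadratic form is
`(1 - ε²|v|²)|y|² + ε² (v × y)²`, which is positive because `ε|v| < 1`.
-/

open Matrix Polynomial

/-- `diagRankOne a k e v` is the block matrix `diag(a, k (I₂ - e v vᵀ))`. -/
def diagRankOne {R : Type*} [CommRing R] (a k e : R) (v : Fin 2 → R) : Matrix (Fin 3) (Fin 3) R :=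
  !![a, 0, 0;
     0, k * (1 - e * v 0 ^ 2), -(k * e * v 0 * v 1);
     0, -(k * e * v 0 * v 1), k * (1 - e * v 1 ^ 2)]

section CommRing

variable {R : Type*} [CommRing R] (a k e : R) (v : Fin 2 → R)

theorem diagRankOne_isSymm : (diagRankOne a k e v).IsSymm :=
  IsSymm.ext fun i j => by fin_cases i <;> fin_cases j <;> rfl

theorem diagRankOne_charpoly :
    (diagRankOne a k e v).charpoly =
      (X - C a) * (X - C k) * (X - C (k * (1 - e * (v 0 ^ 2 + v 1 ^ 2)))) := by
  rw [charpoly, det_fin_three]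
  simp [diagRankOne]
  ring

end CommRing

theorem diagRankOne_quadForm (a k e : ℝ) (v : Fin 2 → ℝ) (x : Fin 3 → ℝ) :
    x ⬝ᵥ diagRankOne a k e v *ᵥ x =
      a * x 0 ^ 2 + k * ((1 - e * (v 0 ^ 2 + v 1 ^ 2)) * (x 1 ^ 2 + x 2 ^ 2)
        + e * (v 0 * x 2 - v 1 * x 1) ^ 2) := by
  simp [diagRankOne, dotProduct, mulVec, Fin.sum_univ_three]
  ring

theorem diagRankOne_posDef {a k e : ℝ} {v : Fin 2 → ℝ} (ha : 0 < a) (hk : 0 < k) (he : 0 ≤ e)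
    (hev : e * (v 0 ^ 2 + v 1 ^ 2) < 1) : (diagRankOne a k e v).PosDef := by
  refine PosDef.of_dotProduct_mulVec_pos (diagRankOne_isSymm a k e v) fun x hx => ?_
  have hx' : 0 < x 0 ^ 2 ∨ 0 < x 1 ^ 2 + x 2 ^ 2 := by
    by_contra! h
    refine hx (funext fun i => ?_)
    fin_cases i <;> simp <;> nlinarith [sq_nonneg (x 0), sq_nonneg (x 1), sq_nonneg (x 2)]
  rw [star_trivial, diagRankOne_quadForm]
  have hlow : 0 ≤ (1 - e * (v 0 ^ 2 + v 1 ^ 2)) * (x 1 ^ 2 + x 2 ^ 2) := by positivity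
  rcases hx' with h0 | h12
  · positivity
  · have : 0 < (1 - e * (v 0 ^ 2 + v 1 ^ 2)) * (x 1 ^ 2 + x 2 ^ 2) := mul_pos (by linarith) h12
    positivity

theorem symmetrizer_mul_eq_diagRankOne {R : Type*} [CommRing R] (ε c N Γ : R) (v : Fin 2 → R)
    (hΓ : Γ ^ 2 * (1 - ε ^ 2 * (v 0 ^ 2 + v 1 ^ 2)) = 1) :
    !![1, -2 * ε ^ 2 * N * c ^ 2 * Γ * v 0, -2 * ε ^ 2 * N * c ^ 2 * Γ * v 1;
       0, N ^ 2 * c ^ 2, 0;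
       0, 0, N ^ 2 * c ^ 2] *
      !![Γ * (1 - ε ^ 4 * c ^ 2 * (v 0 ^ 2 + v 1 ^ 2)), 2 * ε ^ 2 * N * c ^ 2 * v 0,
           2 * ε ^ 2 * N * c ^ 2 * v 1;
         0, Γ * (1 - ε ^ 2 * v 0 ^ 2), -(ε ^ 2) * Γ * v 0 * v 1;
         0, -(ε ^ 2) * Γ * v 0 * v 1, Γ * (1 - ε ^ 2 * v 1 ^ 2)] =
      diagRankOne (Γ * (1 - ε ^ 4 * c ^ 2 * (v 0 ^ 2 + v 1 ^ 2))) (Γ * N ^ 2 * c ^ 2) (ε ^ 2) v := by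
  ext i j
  fin_cases i <;> fin_cases j <;> simp [diagRankOne, mul_apply, Fin.sum_univ_three]
  all_goals first
    | ring1
    | linear_combination -2 * ε ^ 2 * N * c ^ 2 * v 0 * hΓ
    | linear_combination -2 * ε ^ 2 * N * c ^ 2 * v 1 * hΓ

/-- The symmetrizer `S₂` makes `S₂ A₀` symmetric positive definite,
with the stated positive eigenvalues. -/
theorem stmt2 (ε c N : ℝ) (hε : 0 < ε) (hc : 0 < c) (hεc : ε * c < 1) (hN : 0 < N)
    (v : Fin 2 → ℝ) (hv : ε * Real.sqrt (v 0 ^ 2 + v 1 ^ 2) < 1) :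
    let Γ : ℝ := 1 / Real.sqrt (1 - ε ^ 2 * (v 0 ^ 2 + v 1 ^ 2))
    let S₂ : Matrix (Fin 3) (Fin 3) ℝ :=
      !![1, -2 * ε ^ 2 * N * c ^ 2 * Γ * v 0, -2 * ε ^ 2 * N * c ^ 2 * Γ * v 1;
         0, N ^ 2 * c ^ 2, 0;
         0, 0, N ^ 2 * c ^ 2]
    let A₀ : Matrix (Fin 3) (Fin 3) ℝ :=
      !![Γ * (1 - ε ^ 4 * c ^ 2 * (v 0 ^ 2 + v 1 ^ 2)), 2 * ε ^ 2 * N * c ^ 2 * v 0,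
           2 * ε ^ 2 * N * c ^ 2 * v 1;
         0, Γ * (1 - ε ^ 2 * v 0 ^ 2), -(ε ^ 2) * Γ * v 0 * v 1;
         0, -(ε ^ 2) * Γ * v 0 * v 1, Γ * (1 - ε ^ 2 * v 1 ^ 2)]
    let lam₁ : ℝ := Γ * (1 - ε ^ 4 * c ^ 2 * (v 0 ^ 2 + v 1 ^ 2))
    let lam₂ : ℝ := Γ * N ^ 2 * c ^ 2
    let lam₃ : ℝ := Γ * N ^ 2 * c ^ 2 * (1 - ε ^ 2 * (v 0 ^ 2 + v 1 ^ 2))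
    (S₂ * A₀).IsSymm ∧ (S₂ * A₀).PosDef ∧
      (S₂ * A₀).charpoly = (X - C lam₁) * (X - C lam₂) * (X - C lam₃) ∧
      0 < lam₁ ∧ 0 < lam₂ ∧ 0 < lam₃ := by
  intro Γ S₂ A₀ lam₁ lam₂ lam₃
  have hεv : ε ^ 2 * (v 0 ^ 2 + v 1 ^ 2) < 1 :=
    calc ε ^ 2 * (v 0 ^ 2 + v 1 ^ 2) = (ε * Real.sqrt (v 0 ^ 2 + v 1 ^ 2)) ^ 2 := by
          rw [mul_pow, Real.sq_sqrt (by positivity)]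
      _ < 1 := pow_lt_one₀ (by positivity) hv two_ne_zero
  have hεv' : 0 < 1 - ε ^ 2 * (v 0 ^ 2 + v 1 ^ 2) := sub_pos.2 hεv
  have hΓ : 0 < Γ := one_div_pos.2 (Real.sqrt_pos.2 hεv')
  have hΓsq : Γ ^ 2 * (1 - ε ^ 2 * (v 0 ^ 2 + v 1 ^ 2)) = 1 := by
    rw [div_pow, one_pow, Real.sq_sqrt hεv'.le, one_div_mul_cancel hεv'.ne']
  have h₁ : 0 < lam₁ := by
    have hεc' : (ε * c) ^ 2 < 1 := pow_lt_one₀ (by positivity) hεc two_ne_zero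
    have : ε ^ 4 * c ^ 2 * (v 0 ^ 2 + v 1 ^ 2) < 1 := by
      calc ε ^ 4 * c ^ 2 * (v 0 ^ 2 + v 1 ^ 2)
          = (ε * c) ^ 2 * (ε ^ 2 * (v 0 ^ 2 + v 1 ^ 2)) := by ring
        _ < 1 := mul_lt_one_of_nonneg_of_lt_one_left (by positivity) hεc' hεv.le
    exact mul_pos hΓ (sub_pos.2 this)
  have h₂ : 0 < lam₂ := by positivity
  have h₃ : 0 < lam₃ := mul_pos h₂ hεv'
  rw [show S₂ * A₀ = diagRankOne lam₁ lam₂ (ε ^ 2) v from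
    symmetrizer_mul_eq_diagRankOne ε c N Γ v hΓsq, diagRankOne_charpoly]
  exact ⟨diagRankOne_isSymm .., diagRankOne_posDef h₁ h₂ (by positivity) hεv, rfl, h₁, h₂, h₃⟩
end

section
/- Let $\epsilon>0$, $\bar c>0$, $\bar v>0$ with $\epsilon\bar c<1$, $\epsilon\bar v<1$, and assume the stability condition $\bar v/\bar c > \sqrt{2}/\sqrt{1+\epsilon^2\bar c^2}$. Then $E_3:=2\bar c^2\bar v^2-\epsilon^2\bar c^2\bar v^4-\bar v^4<0$, and consequently the two roots $z^2 = \frac{-E_2\pm\sqrt{E_2^2-4E_1E_3}}{2E_1}$ of $E_1 z^4+E_2 z^2+E_3=0$ (with $E_1,E_2$ as above) are real, positive, and distinct. -/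
/-!
Writing `x = ε²v²` and `y = ε²c²` (both in `(0, 1)`), the coefficients factor as
`E₁ = y(2x - 1) - 1`, `E₂ = 2(c²(1 - x)² + v²(1 - y))`, `E₃ = v²(2c² - v²(1 + y))`, and
`E₂² - 4E₁E₃ = 4c²(1 - x)²(c²(1 - x)² + 4v²)`. So `E₁ < 0 < E₂`, the discriminant is
positive, and the squared stability condition `2c² < v²(1 + y)` is exactly `E₃ < 0`.
A quadratic with `a < 0 < b` and `c < 0` has both roots positive, since `√(b² - 4ac) < b`.
-/

section Quadratic

variable {a b c : ℝ}

theorem quadratic_eq_zero_of_root_add (ha : a ≠ 0) (hD : 0 ≤ discrim a b c) :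
    a * ((-b + √(discrim a b c)) / (2 * a)) ^ 2 + b * ((-b + √(discrim a b c)) / (2 * a)) + c
      = 0 := by
  rw [sq, quadratic_eq_zero_iff ha (Real.mul_self_sqrt hD).symm]
  exact Or.inl rfl

theorem quadratic_eq_zero_of_root_sub (ha : a ≠ 0) (hD : 0 ≤ discrim a b c) :
    a * ((-b - √(discrim a b c)) / (2 * a)) ^ 2 + b * ((-b - √(discrim a b c)) / (2 * a)) + c
      = 0 := by
  rw [sq, quadratic_eq_zero_iff ha (Real.mul_self_sqrt hD).symm]
  exact Or.inr rfl

theorem sqrt_discrim_lt_of_neg_of_neg (ha : a < 0) (hb : 0 < b) (hc : c < 0) :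
    √(discrim a b c) < b := by
  rw [Real.sqrt_lt' hb, discrim]
  nlinarith [mul_pos_of_neg_of_neg ha hc]

theorem quadratic_roots_pos_of_neg_of_pos_of_neg (ha : a < 0) (hb : 0 < b) (hc : c < 0) :
    0 < (-b + √(discrim a b c)) / (2 * a) ∧ 0 < (-b - √(discrim a b c)) / (2 * a) := by
  have hlt := sqrt_discrim_lt_of_neg_of_neg ha hb hc
  have hs := Real.sqrt_nonneg (discrim a b c)
  exact ⟨div_pos_of_neg_of_neg (by linarith) (by linarith),
    div_pos_of_neg_of_neg (by linarith) (by linarith)⟩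

theorem quadratic_roots_ne_of_discrim_pos (ha : a ≠ 0) (hD : 0 < discrim a b c) :
    (-b + √(discrim a b c)) / (2 * a) ≠ (-b - √(discrim a b c)) / (2 * a) := by
  have hs := Real.sqrt_pos.mpr hD
  intro h
  rw [div_left_inj' (mul_ne_zero two_ne_zero ha)] at h
  linarith

end Quadratic

namespace RelativisticVortexSheet

variable (ε c v : ℝ)

def E₁ : ℝ := 2 * ε ^ 4 * c ^ 2 * v ^ 2 - ε ^ 2 * c ^ 2 - 1

def E₂ : ℝ := 2 * ε ^ 4 * c ^ 2 * v ^ 4 - 6 * ε ^ 2 * c ^ 2 * v ^ 2 + 2 * v ^ 2 + 2 * c ^ 2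

def E₃ : ℝ := 2 * c ^ 2 * v ^ 2 - ε ^ 2 * c ^ 2 * v ^ 4 - v ^ 4

theorem E₂_eq : E₂ ε c v = 2 * (c ^ 2 * (1 - ε ^ 2 * v ^ 2) ^ 2 + v ^ 2 * (1 - ε ^ 2 * c ^ 2)) := by
  unfold E₂; ring

theorem E₃_eq : E₃ ε c v = v ^ 2 * (2 * c ^ 2 - v ^ 2 * (1 + ε ^ 2 * c ^ 2)) := by
  unfold E₃; ring

theorem discrim_eq :
    discrim (E₁ ε c v) (E₂ ε c v) (E₃ ε c v)
      = 4 * c ^ 2 * (1 - ε ^ 2 * v ^ 2) ^ 2 * (c ^ 2 * (1 - ε ^ 2 * v ^ 2) ^ 2 + 4 * v ^ 2) := by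
  unfold discrim E₁ E₂ E₃; ring

variable {ε c v}

theorem E₁_neg (hεc : ε ^ 2 * c ^ 2 < 1) (hεv : ε ^ 2 * v ^ 2 < 1) : E₁ ε c v < 0 := by
  unfold E₁
  nlinarith [mul_nonneg (sq_nonneg ε) (sq_nonneg c)]

theorem E₂_pos (hv : v ≠ 0) (hεc : ε ^ 2 * c ^ 2 < 1) : 0 < E₂ ε c v := by
  rw [E₂_eq]
  have := mul_pos (sq_pos_of_ne_zero hv) (sub_pos.mpr hεc)
  positivity

theorem E₃_neg (hv : v ≠ 0) (hstab : 2 * c ^ 2 < v ^ 2 * (1 + ε ^ 2 * c ^ 2)) :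
    E₃ ε c v < 0 := by
  rw [E₃_eq]
  exact mul_neg_of_pos_of_neg (sq_pos_of_ne_zero hv) (by linarith)

theorem discrim_pos (hc : c ≠ 0) (hεv : ε ^ 2 * v ^ 2 ≠ 1) :
    0 < discrim (E₁ ε c v) (E₂ ε c v) (E₃ ε c v) := by
  rw [discrim_eq]
  have : (1 - ε ^ 2 * v ^ 2) ≠ 0 := sub_ne_zero.mpr hεv.symm
  positivity

theorem two_mul_sq_lt_of_stable (hc : 0 < c)
    (hstab : √2 / √(1 + ε ^ 2 * c ^ 2) < v / c) :
    2 * c ^ 2 < v ^ 2 * (1 + ε ^ 2 * c ^ 2) := by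
  have hk : 0 < 1 + ε ^ 2 * c ^ 2 := by positivity
  have hsq := pow_lt_pow_left₀ hstab (by positivity) two_ne_zero
  rw [div_pow, div_pow, Real.sq_sqrt zero_le_two, Real.sq_sqrt hk.le,
    div_lt_div_iff₀ hk (by positivity)] at hsq
  linarith

end RelativisticVortexSheet

open RelativisticVortexSheet in
/-- Under the stability condition, `E₃ < 0`, and the two roots
`z² = (-E₂ ± √(E₂²-4E₁E₃))/(2E₁)` of `E₁z⁴+E₂z²+E₃ = 0` are real, positive
and distinct. -/
theorem stmt7 (ε c v : ℝ) (hε : 0 < ε) (hc : 0 < c) (hv : 0 < v)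
    (hεc : ε * c < 1) (hεv : ε * v < 1)
    (hstab : v / c > Real.sqrt 2 / Real.sqrt (1 + ε ^ 2 * c ^ 2)) :
    let E₁ : ℝ := 2 * ε ^ 4 * c ^ 2 * v ^ 2 - ε ^ 2 * c ^ 2 - 1
    let E₂ : ℝ := 2 * ε ^ 4 * c ^ 2 * v ^ 4 - 6 * ε ^ 2 * c ^ 2 * v ^ 2 + 2 * v ^ 2 + 2 * c ^ 2
    let E₃ : ℝ := 2 * c ^ 2 * v ^ 2 - ε ^ 2 * c ^ 2 * v ^ 4 - v ^ 4
    let r₁ : ℝ := (-E₂ + Real.sqrt (E₂ ^ 2 - 4 * E₁ * E₃)) / (2 * E₁)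
    let r₂ : ℝ := (-E₂ - Real.sqrt (E₂ ^ 2 - 4 * E₁ * E₃)) / (2 * E₁)
    E₃ < 0 ∧ 0 < r₁ ∧ 0 < r₂ ∧ r₁ ≠ r₂ ∧
      E₁ * r₁ ^ 2 + E₂ * r₁ + E₃ = 0 ∧ E₁ * r₂ ^ 2 + E₂ * r₂ + E₃ = 0 := by
  intro _ _ _ _ _
  have hεc2 : ε ^ 2 * c ^ 2 < 1 := by
    rw [← mul_pow]; exact pow_lt_one₀ (by positivity) hεc two_ne_zero
  have hεv2 : ε ^ 2 * v ^ 2 < 1 := by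
    rw [← mul_pow]; exact pow_lt_one₀ (by positivity) hεv two_ne_zero
  have hE₁ := E₁_neg hεc2 hεv2
  have hE₃ := E₃_neg hv.ne' (two_mul_sq_lt_of_stable hc hstab)
  have hD := discrim_pos hc.ne' hεv2.ne
  obtain ⟨hr₁, hr₂⟩ := quadratic_roots_pos_of_neg_of_pos_of_neg hE₁ (E₂_pos hv.ne' hεc2) hE₃
  exact ⟨hE₃, hr₁, hr₂, quadratic_roots_ne_of_discrim_pos hE₁.ne hD,
    quadratic_eq_zero_of_root_add hE₁.ne hD.le, quadratic_eq_zero_of_root_sub hE₁.ne hD.le⟩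
end

section
/- Let $\epsilon>0$, $\bar c>0$, $\bar v>0$ with $\epsilon\bar c<1$, $\epsilon\bar v<1$ and $\bar v>\bar c$. With $E_1,E_2,E_3$ and $\widebar C_1,\widebar C_2$ defined as in the Lopatinskii analysis (i.e. $E_1=2\epsilon^4\bar c^2\bar v^2-\epsilon^2\bar c^2-1$, $E_2=2\epsilon^4\bar c^2\bar v^4-6\epsilon^2\bar c^2\bar v^2+2\bar v^2+2\bar c^2$, $E_3=2\bar c^2\bar v^2-\epsilon^2\bar c^2\bar v^4-\bar v^4$), assume $E_3<0$ and set $z_2^2=\frac{E_2+\sqrt{E_2^2-4E_1E_3}}{-2E_1}$. Then $z_2^2>(\widebar C_1^{-1}+\widebar C_2)^2$. -/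
/-!
Writing `T = (c + v) / (1 + ε² c v)` (the relativistic sum of the speeds `c` and `v`), a direct
computation gives `C̄₁⁻¹ + C̄₂ = T` and
`E₁ T⁴ + E₂ T² + E₃ = c⁴ (1 - ε² c²) (1 - ε² v²)⁴ / (1 + ε² c v)⁴ > 0`.
Since `E₁ < 0`, the quadratic `E₁ s² + E₂ s + E₃` is positive only strictly between its roots,
so `T²` lies below the larger root `z₂²`.
-/

lemma lt_larger_root_of_quadratic_pos {a b c x : ℝ} (ha : a < 0)
    (hx : 0 < a * x ^ 2 + b * x + c) :
    x < (b + √(discrim a b c)) / (-(2 * a)) := by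
  rw [lt_div_iff₀ (by linarith)]
  suffices h : x * -(2 * a) - b < √(discrim a b c) by linarith
  rcases lt_or_ge (x * -(2 * a) - b) 0 with hneg | hnonneg
  · exact hneg.trans_le (Real.sqrt_nonneg _)
  · rw [Real.lt_sqrt hnonneg, discrim]
    -- `discrim a b c - (2 a x + b)² = -4 a (a x² + b x + c)`
    nlinarith [mul_pos (neg_pos.mpr ha) hx]

lemma inv_add_eq_velocity_sum {ε c v : ℝ} (hplus : 1 + ε ^ 2 * c * v ≠ 0)
    (hprod : 1 - ε ^ 4 * c ^ 2 * v ^ 2 ≠ 0) :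
    ((1 - ε ^ 4 * c ^ 2 * v ^ 2) / ((1 - ε ^ 2 * v ^ 2) * c))⁻¹ +
        ((1 - ε ^ 2 * c ^ 2) * v) / (1 - ε ^ 4 * c ^ 2 * v ^ 2) =
      (c + v) / (1 + ε ^ 2 * c * v) := by
  rw [inv_div, ← add_div, div_eq_div_iff hprod hplus]
  ring

lemma quartic_at_velocity_sum {ε c v : ℝ} (h : 1 + ε ^ 2 * c * v ≠ 0) :
    let T := (c + v) / (1 + ε ^ 2 * c * v)
    (2 * ε ^ 4 * c ^ 2 * v ^ 2 - ε ^ 2 * c ^ 2 - 1) * (T ^ 2) ^ 2 +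
        (2 * ε ^ 4 * c ^ 2 * v ^ 4 - 6 * ε ^ 2 * c ^ 2 * v ^ 2 + 2 * v ^ 2 + 2 * c ^ 2) * T ^ 2 +
        (2 * c ^ 2 * v ^ 2 - ε ^ 2 * c ^ 2 * v ^ 4 - v ^ 4) =
      c ^ 4 * (1 - ε ^ 2 * c ^ 2) * (1 - ε ^ 2 * v ^ 2) ^ 4 / (1 + ε ^ 2 * c * v) ^ 4 := by
  intro T
  simp only [T]
  field_simp
  ring

theorem stmt11_general (ε c v : ℝ) (hε : 0 < ε) (hc : 0 < c) (hv : 0 < v)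
    (hεc : ε * c < 1) (hεv : ε * v < 1) :
    let E₁ : ℝ := 2 * ε ^ 4 * c ^ 2 * v ^ 2 - ε ^ 2 * c ^ 2 - 1
    let E₂ : ℝ := 2 * ε ^ 4 * c ^ 2 * v ^ 4 - 6 * ε ^ 2 * c ^ 2 * v ^ 2 + 2 * v ^ 2 + 2 * c ^ 2
    let E₃ : ℝ := 2 * c ^ 2 * v ^ 2 - ε ^ 2 * c ^ 2 * v ^ 4 - v ^ 4
    let C₁ : ℝ := (1 - ε ^ 4 * c ^ 2 * v ^ 2) / ((1 - ε ^ 2 * v ^ 2) * c)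
    let C₂ : ℝ := ((1 - ε ^ 2 * c ^ 2) * v) / (1 - ε ^ 4 * c ^ 2 * v ^ 2)
    E₃ < 0 →
      (E₂ + Real.sqrt (E₂ ^ 2 - 4 * E₁ * E₃)) / (-(2 * E₁)) > (C₁⁻¹ + C₂) ^ 2 := by
  intro E₁ E₂ E₃ C₁ C₂ _
  have hεc2 : ε ^ 2 * c ^ 2 < 1 := by
    rw [← mul_pow]; exact pow_lt_one₀ (by positivity) hεc two_ne_zero
  have hεv2 : ε ^ 2 * v ^ 2 < 1 := by
    rw [← mul_pow]; exact pow_lt_one₀ (by positivity) hεv two_ne_zero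
  have hεcv : ε ^ 2 * c * v < 1 := by nlinarith [mul_pos (mul_pos hε hc) (mul_pos hε hv)]
  have hε4 : ε ^ 4 * c ^ 2 * v ^ 2 < 1 := by nlinarith [mul_pos (mul_pos hε hc) (mul_pos hε hv)]
  -- `E₁ = ε² c² (2 ε² v² - 1) - 1 < ε² c² - 1`
  have hE₁ : E₁ < 0 := by
    nlinarith [mul_pos (by positivity : (0 : ℝ) < ε ^ 2 * c ^ 2) (sub_pos.mpr hεv2)]
  set T := (c + v) / (1 + ε ^ 2 * c * v)
  have hsum : C₁⁻¹ + C₂ = T := inv_add_eq_velocity_sum (by positivity) (sub_pos.mpr hε4).ne'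
  have hP : 0 < E₁ * (T ^ 2) ^ 2 + E₂ * T ^ 2 + E₃ := by
    rw [quartic_at_velocity_sum (by positivity)]
    have := sub_pos.mpr hεc2
    positivity
  rw [hsum]
  exact lt_larger_root_of_quadratic_pos hE₁ hP

/-- the larger root satisfies `z₂² > (C̄₁⁻¹ + C̄₂)²`. -/
theorem stmt11 (ε c v : ℝ) (hε : 0 < ε) (hc : 0 < c) (hv : 0 < v)
    (hεc : ε * c < 1) (hεv : ε * v < 1) (hvc : v > c) :
    let E₁ : ℝ := 2 * ε ^ 4 * c ^ 2 * v ^ 2 - ε ^ 2 * c ^ 2 - 1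
    let E₂ : ℝ := 2 * ε ^ 4 * c ^ 2 * v ^ 4 - 6 * ε ^ 2 * c ^ 2 * v ^ 2 + 2 * v ^ 2 + 2 * c ^ 2
    let E₃ : ℝ := 2 * c ^ 2 * v ^ 2 - ε ^ 2 * c ^ 2 * v ^ 4 - v ^ 4
    let C₁ : ℝ := (1 - ε ^ 4 * c ^ 2 * v ^ 2) / ((1 - ε ^ 2 * v ^ 2) * c)
    let C₂ : ℝ := ((1 - ε ^ 2 * c ^ 2) * v) / (1 - ε ^ 4 * c ^ 2 * v ^ 2)
    E₃ < 0 →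
      (E₂ + Real.sqrt (E₂ ^ 2 - 4 * E₁ * E₃)) / (-(2 * E₁)) > (C₁⁻¹ + C₂) ^ 2 :=
  stmt11_general ε c v hε hc hv hεc hεv
end

section
/- Let $C_0,C_1,C_2>0$ and let $\tau\in\mathbb{C}$ with $\operatorname{Re}\tau>0$, and $\eta\in\mathbb{R}$. Then no root $\omega$ of the equation $\omega^2=C_0^2\big(C_1^2(\tau+iC_2\eta)^2+\eta^2\big)$ is purely imaginary. Consequently the equation has exactly one root with strictly negative real part and one with strictly positive real part. -/
/-- for `Re τ > 0` no root of
`ω² = C₀²(C₁²(τ+iC₂η)² + η²)` is purely imaginary, and there is exactly one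
root with negative real part and exactly one with positive real part. -/
theorem stmt13 (C₀ C₁ C₂ : ℝ) (h₀ : 0 < C₀) (h₁ : 0 < C₁) (h₂ : 0 < C₂)
    (τ : ℂ) (η : ℝ) (hτ : 0 < τ.re) :
    let K : ℂ := (C₀ : ℂ) ^ 2 * ((C₁ : ℂ) ^ 2 * (τ + Complex.I * C₂ * η) ^ 2 + (η : ℂ) ^ 2)
    (∀ ω : ℂ, ω ^ 2 = K → ω.re ≠ 0) ∧
      (∃! ω : ℂ, ω ^ 2 = K ∧ ω.re < 0) ∧
      (∃! ω : ℂ, ω ^ 2 = K ∧ 0 < ω.re) := by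
  intro K
  have hKim : K.im = C₀ ^ 2 * C₁ ^ 2 * 2 * τ.re * (τ.im + C₂ * η) := by
    simp [K, pow_two, Complex.mul_im, Complex.mul_re]
    ring
  have hKre : K.re = C₀ ^ 2 * (C₁ ^ 2 * (τ.re ^ 2 - (τ.im + C₂ * η) ^ 2) + η ^ 2) := by
    simp [K, pow_two, Complex.mul_im, Complex.mul_re]
  -- main fact: no root is purely imaginary
  have main : ∀ ω : ℂ, ω ^ 2 = K → ω.re ≠ 0 := by
    intro ω hω hre
    have him : K.im = 0 := by
      rw [← hω]
      simp [pow_two, Complex.mul_im, hre]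
    have hre' : K.re ≤ 0 := by
      rw [← hω]
      simp [pow_two, Complex.mul_re, hre]
      nlinarith [sq_nonneg ω.im]
    by_cases hs : τ.im + C₂ * η = 0
    · rw [hKre, hs] at hre'
      have : 0 < C₀ ^ 2 * (C₁ ^ 2 * (τ.re ^ 2 - 0 ^ 2) + η ^ 2) := by
        have : 0 < τ.re ^ 2 := by positivity
        nlinarith [sq_nonneg η, sq_nonneg C₀, sq_nonneg C₁, mul_pos (mul_pos h₀ h₀) (mul_pos (mul_pos h₁ h₁) this)]
      linarith
    · rw [hKim] at him
      have h1 : C₀ ^ 2 * C₁ ^ 2 * 2 * τ.re ≠ 0 := by positivity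
      exact hs (by
        rcases mul_eq_zero.mp him with h | h
        · exact absurd h h1
        · exact h)
  refine ⟨main, ?_⟩
  -- K ≠ 0
  have hK0 : K ≠ 0 := by
    intro h
    have : (0 : ℂ) ^ 2 = K := by rw [h]; ring
    exact main 0 this rfl
  -- a square root of K
  obtain ⟨z, hz⟩ : ∃ z : ℂ, z ^ 2 = K := by
    refine ⟨K ^ ((2 : ℕ) : ℂ)⁻¹, ?_⟩
    exact Complex.cpow_nat_inv_pow K two_ne_zero
  have hzre : z.re ≠ 0 := main z hz
  have roots : ∀ ω : ℂ, ω ^ 2 = K → ω = z ∨ ω = -z := by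
    intro ω hω
    have : (ω - z) * (ω + z) = 0 := by
      have : ω ^ 2 - z ^ 2 = 0 := by rw [hω, hz]; ring
      linear_combination this
    rcases mul_eq_zero.mp this with h | h
    · left; exact sub_eq_zero.mp h
    · right; have := add_eq_zero_iff_eq_neg.mp h; exact this
  have hnz : (-z) ^ 2 = K := by rw [neg_pow]; simp [hz]
  rcases lt_or_gt_of_ne hzre with hneg | hpos
  · constructor
    · refine ⟨z, ⟨hz, hneg⟩, ?_⟩
      rintro ω ⟨hω, hωre⟩
      rcases roots ω hω with h | h
      · exact h
      · exfalso; rw [h] at hωre; simp at hωre; linarith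
    · refine ⟨-z, ⟨hnz, by simp; linarith⟩, ?_⟩
      rintro ω ⟨hω, hωre⟩
      rcases roots ω hω with h | h
      · exfalso; rw [h] at hωre; linarith
      · exact h
  · constructor
    · refine ⟨-z, ⟨hnz, by simp; linarith⟩, ?_⟩
      rintro ω ⟨hω, hωre⟩
      rcases roots ω hω with h | h
      · exfalso; rw [h] at hωre; linarith
      · exact h
    · refine ⟨z, ⟨hz, hpos⟩, ?_⟩
      rintro ω ⟨hω, hωre⟩
      rcases roots ω hω with h | h
      · exact h
      · exfalso; rw [h] at hωre; simp at hωre; linarith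
end

section
/- Let $\lambda_2(U,\xi)=v_1(U)\xi-v_2(U)$ where $v_1,v_2$ are as in the symmetrized relativistic Euler system with unknowns $U=(p,hw_1,hw_2)$, and let $r_2(U,\xi)=(0,\ 1-\epsilon^2v_2^2+\epsilon^2v_1v_2\xi,\ (1-\epsilon^2v_1^2)\xi+\epsilon^2v_1v_2)^{\mathsf T}$. Then $\nabla_U\lambda_2(U,\xi)\cdot r_2(U,\xi)=0$ for all $U$ in the hyperbolicity region and all $\xi\in\mathbb{R}$, i.e. the characteristic field $\lambda_2$ is linearly degenerate. -/
/-- linear degeneracy of the characteristic field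
`λ₂(U,ξ) = v₁(U)ξ - v₂(U)`: `∇_U λ₂ · r₂ = 0`. -/
theorem stmt19 (ε : ℝ) (hε : 0 < ε) (h N : ℝ → ℝ)
    (hNpos : ∀ x, 0 < N x) (hhpos : ∀ x, 0 < h x)
    (hhderiv : ∀ x, HasDerivAt h (ε ^ 2 / N x) x) :
    ∀ (U₁ U₂ U₃ ξ : ℝ),
      let Γf : ℝ → ℝ → ℝ → ℝ := fun u₁ u₂ u₃ =>
        Real.sqrt (h u₁ ^ 2 + ε ^ 2 * u₂ ^ 2 + ε ^ 2 * u₃ ^ 2) / h u₁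
      let v₁ : ℝ → ℝ → ℝ → ℝ := fun u₁ u₂ u₃ => u₂ / (Γf u₁ u₂ u₃ * h u₁)
      let v₂ : ℝ → ℝ → ℝ → ℝ := fun u₁ u₂ u₃ => u₃ / (Γf u₁ u₂ u₃ * h u₁)
      let lam : ℝ → ℝ → ℝ → ℝ := fun u₁ u₂ u₃ => v₁ u₁ u₂ u₃ * ξ - v₂ u₁ u₂ u₃
      deriv (fun t => lam t U₂ U₃) U₁ * 0 +
        deriv (fun t => lam U₁ t U₃) U₂ *
          (1 - ε ^ 2 * v₂ U₁ U₂ U₃ ^ 2 + ε ^ 2 * v₁ U₁ U₂ U₃ * v₂ U₁ U₂ U₃ * ξ) +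
        deriv (fun t => lam U₁ U₂ t) U₃ *
          ((1 - ε ^ 2 * v₁ U₁ U₂ U₃ ^ 2) * ξ + ε ^ 2 * v₁ U₁ U₂ U₃ * v₂ U₁ U₂ U₃) = 0 := by
  intro U₁ U₂ U₃ ξ Γf v₁ v₂ lam
  -- notation
  have hpos : ∀ t s : ℝ, 0 < h U₁ ^ 2 + ε ^ 2 * t ^ 2 + ε ^ 2 * s ^ 2 := fun t s => by
    have := hhpos U₁; positivity
  set S : ℝ := Real.sqrt (h U₁ ^ 2 + ε ^ 2 * U₂ ^ 2 + ε ^ 2 * U₃ ^ 2) with hS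
  have hSpos : 0 < S := Real.sqrt_pos.mpr (hpos U₂ U₃)
  have hΓh : ∀ t s : ℝ, Γf U₁ t s * h U₁ =
      Real.sqrt (h U₁ ^ 2 + ε ^ 2 * t ^ 2 + ε ^ 2 * s ^ 2) :=
    fun t s => div_mul_cancel₀ _ (hhpos U₁).ne'
  have hv₁ : v₁ U₁ U₂ U₃ = U₂ / S := by simp only [v₁, hΓh, hS]
  have hv₂ : v₂ U₁ U₂ U₃ = U₃ / S := by simp only [v₂, hΓh, hS]
  -- derivative in the second variable
  have hg2 : HasDerivAt (fun t : ℝ => h U₁ ^ 2 + ε ^ 2 * t ^ 2 + ε ^ 2 * U₃ ^ 2)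
      (ε ^ 2 * (2 * U₂ ^ 1)) U₂ :=
    (((hasDerivAt_pow 2 U₂).const_mul (ε ^ 2)).const_add (h U₁ ^ 2)).add_const _
  have hsqrt2 : HasDerivAt
      (fun t : ℝ => Real.sqrt (h U₁ ^ 2 + ε ^ 2 * t ^ 2 + ε ^ 2 * U₃ ^ 2))
      (ε ^ 2 * (2 * U₂ ^ 1) / (2 * S)) U₂ := hg2.sqrt (hpos U₂ U₃).ne'
  have hnum2 : HasDerivAt (fun t : ℝ => t * ξ - U₃) (1 * ξ) U₂ :=
    ((hasDerivAt_id U₂).mul_const ξ).sub_const U₃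
  have hd2 : HasDerivAt (fun t : ℝ =>
      (t * ξ - U₃) / Real.sqrt (h U₁ ^ 2 + ε ^ 2 * t ^ 2 + ε ^ 2 * U₃ ^ 2))
      ((1 * ξ * S - (U₂ * ξ - U₃) * (ε ^ 2 * (2 * U₂ ^ 1) / (2 * S))) / S ^ 2) U₂ :=
    hnum2.div hsqrt2 hSpos.ne'
  have heq2 : (fun t => lam U₁ t U₃) = fun t : ℝ =>
      (t * ξ - U₃) / Real.sqrt (h U₁ ^ 2 + ε ^ 2 * t ^ 2 + ε ^ 2 * U₃ ^ 2) := by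
    funext t
    simp only [lam, v₁, v₂, hΓh]
    ring
  -- derivative in the third variable
  have hg3 : HasDerivAt (fun t : ℝ => h U₁ ^ 2 + ε ^ 2 * U₂ ^ 2 + ε ^ 2 * t ^ 2)
      (ε ^ 2 * (2 * U₃ ^ 1)) U₃ :=
    ((hasDerivAt_pow 2 U₃).const_mul (ε ^ 2)).const_add _
  have hsqrt3 : HasDerivAt
      (fun t : ℝ => Real.sqrt (h U₁ ^ 2 + ε ^ 2 * U₂ ^ 2 + ε ^ 2 * t ^ 2))
      (ε ^ 2 * (2 * U₃ ^ 1) / (2 * S)) U₃ := hg3.sqrt (hpos U₂ U₃).ne'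
  have hnum3 : HasDerivAt (fun t : ℝ => U₂ * ξ - t) (-1) U₃ := by
    simpa using (hasDerivAt_id U₃).const_sub (U₂ * ξ)
  have hd3 : HasDerivAt (fun t : ℝ =>
      (U₂ * ξ - t) / Real.sqrt (h U₁ ^ 2 + ε ^ 2 * U₂ ^ 2 + ε ^ 2 * t ^ 2))
      ((-1 * S - (U₂ * ξ - U₃) * (ε ^ 2 * (2 * U₃ ^ 1) / (2 * S))) / S ^ 2) U₃ :=
    hnum3.div hsqrt3 hSpos.ne'
  have heq3 : (fun t => lam U₁ U₂ t) = fun t : ℝ =>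
      (U₂ * ξ - t) / Real.sqrt (h U₁ ^ 2 + ε ^ 2 * U₂ ^ 2 + ε ^ 2 * t ^ 2) := by
    funext t
    simp only [lam, v₁, v₂, hΓh]
    ring
  rw [heq2, heq3, hd2.deriv, hd3.deriv, hv₁, hv₂]
  field_simp
  ring
end
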